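/- arXiv:1309.4226 — 13 statements merged into one kernel-verified Lean document; each statement's English description precedes it below -/
import Mathlib

section
/- For positive integer n and integers m, x with gcd(m,n)=gcd(x,n)=1, the Dedekind sums satisfy 12·s(x,n) − 12·s(m,n) ∈ ℤ if and only if (x−m)(xm−1) ≡ 0 (mod n). -/
open Classical in
noncomputable def sawtooth (t : ℝ) : ℝ :=
  if ∃ z : ℤ, t = (z : ℝ) then 0 else t - ⌊t⌋ - 1/2

noncomputable def dedekindSum (m : ℤ) (n : ℕ) : ℝ :=
  ∑ k ∈ Finset.Icc 1 n, sawtooth ((k : ℝ) / n) * sawtooth ((m * k : ℝ) / n)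

lemma DS.floor_int_div_nat (a : ℤ) (d : ℕ) : ⌊(a:ℝ)/(d:ℝ)⌋ = a / (d:ℤ) := by
  rw [show (a:ℝ)/(d:ℝ) = (((a:ℚ)/(d:ℚ) : ℚ):ℝ) by push_cast; ring, Rat.floor_cast,
    Rat.floor_intCast_div_natCast]

lemma DS.sum_id (K : ℕ) : 2 * ∑ j ∈ Finset.Icc 1 K, (j:ℤ) = K*(K+1) := by
  induction K with
  | zero => simp
  | succ n ih =>
    rw [Finset.sum_Icc_succ_top (by omega), mul_add]
    push_cast
    push_cast at ih
    linarith

lemma DS.sum_sq (K : ℕ) : 6 * ∑ j ∈ Finset.Icc 1 K, (j:ℤ)^2 = K*(K+1)*(2*K+1) := by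
  induction K with
  | zero => simp
  | succ n ih =>
    rw [Finset.sum_Icc_succ_top (by omega), mul_add]
    push_cast
    push_cast at ih
    linarith

-- k does not divide h*j for 1 ≤ j ≤ k-1
lemma DS.not_dvd (h : ℤ) (k : ℕ) (hcop : IsCoprime h (k:ℤ)) (j : ℕ)
    (hj : j ∈ Finset.Icc 1 (k-1)) : ¬ (k:ℤ) ∣ h * (j:ℤ) := by
  simp only [Finset.mem_Icc] at hj
  intro hd
  have hdj : (k:ℤ) ∣ (j:ℤ) := (hcop.symm.dvd_of_dvd_mul_left hd)
  have := Int.le_of_dvd (by exact_mod_cast hj.1) hdj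
  omega

lemma DS.sum_emod {M : Type*} [AddCommMonoid M] (h : ℤ) (k : ℕ) (hk : 0 < k)
    (hcop : IsCoprime h (k:ℤ)) (g : ℤ → M) :
    ∑ j ∈ Finset.Icc 1 (k-1), g ((h * (j:ℤ)) % (k:ℤ))
      = ∑ j ∈ Finset.Icc 1 (k-1), g (j : ℤ) := by
  obtain ⟨a, b, hab⟩ := hcop
  have hcop' : IsCoprime h (k:ℤ) := ⟨a, b, hab⟩
  have hacop : IsCoprime a (k:ℤ) := ⟨h, b, by linarith [hab]; ⟩
  have hkpos : (0:ℤ) < (k:ℤ) := by exact_mod_cast hk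
  refine Finset.sum_nbij' (i := fun j => ((h * (j:ℤ)) % (k:ℤ)).toNat)
    (j := fun j => ((a * (j:ℤ)) % (k:ℤ)).toNat) ?_ ?_ ?_ ?_ ?_
  · intro j hj
    have h1 : 0 ≤ (h * (j:ℤ)) % k := Int.emod_nonneg _ (by omega)
    have h2 : (h * (j:ℤ)) % k < k := Int.emod_lt_of_pos _ hkpos
    have h3 : (h * (j:ℤ)) % k ≠ 0 := by
      intro h0
      exact DS.not_dvd h k hcop' j hj (Int.dvd_of_emod_eq_zero h0)
    simp only [Finset.mem_Icc]
    omega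
  · intro j hj
    have h1 : 0 ≤ (a * (j:ℤ)) % k := Int.emod_nonneg _ (by omega)
    have h2 : (a * (j:ℤ)) % k < k := Int.emod_lt_of_pos _ hkpos
    have h3 : (a * (j:ℤ)) % k ≠ 0 := by
      intro h0
      exact DS.not_dvd a k hacop j hj (Int.dvd_of_emod_eq_zero h0)
    simp only [Finset.mem_Icc]
    omega
  · intro j hj
    simp only [Finset.mem_Icc] at hj
    have h1 : 0 ≤ (h * (j:ℤ)) % k := Int.emod_nonneg _ (by omega)
    have e1 : ((((h * (j:ℤ)) % (k:ℤ)).toNat : ℤ)) = (h * (j:ℤ)) % k := Int.toNat_of_nonneg h1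
    have e2 : (a * (((h * (j:ℤ)) % (k:ℤ)))) % k = (a * (h * (j:ℤ))) % k := by
      conv_rhs => rw [Int.mul_emod]
      rw [Int.mul_emod, Int.emod_emod_of_dvd _ dvd_rfl]
    have e3 : (a * (h * (j:ℤ))) % k = (j:ℤ) % k := by
      have : a * (h * (j:ℤ)) = (j:ℤ) + (k:ℤ) * ((-b) * j) := by linear_combination (j:ℤ) * hab
      rw [this, Int.add_mul_emod_self_left]
    have e4 : (j:ℤ) % k = (j:ℤ) := Int.emod_eq_of_lt (by omega) (by omega)
    beta_reduce
    rw [e1]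
    omega
  · intro j hj
    simp only [Finset.mem_Icc] at hj
    have h1 : 0 ≤ (a * (j:ℤ)) % k := Int.emod_nonneg _ (by omega)
    have e1 : ((((a * (j:ℤ)) % (k:ℤ)).toNat : ℤ)) = (a * (j:ℤ)) % k := Int.toNat_of_nonneg h1
    have e2 : (h * (((a * (j:ℤ)) % (k:ℤ)))) % k = (h * (a * (j:ℤ))) % k := by
      conv_rhs => rw [Int.mul_emod]
      rw [Int.mul_emod, Int.emod_emod_of_dvd _ dvd_rfl]
    have e3 : (h * (a * (j:ℤ))) % k = (j:ℤ) % k := by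
      have : h * (a * (j:ℤ)) = (j:ℤ) + (k:ℤ) * ((-b) * j) := by linear_combination (j:ℤ) * hab
      rw [this, Int.add_mul_emod_self_left]
    have e4 : (j:ℤ) % k = (j:ℤ) := Int.emod_eq_of_lt (by omega) (by omega)
    beta_reduce
    rw [e1]
    omega
  · intro j hj
    have h1 : 0 ≤ (h * (j:ℤ)) % k := Int.emod_nonneg _ (by omega)
    congr 1
    exact (Int.toNat_of_nonneg h1).symm

def DS.U (h : ℤ) (k : ℕ) : ℤ := ∑ j ∈ Finset.Icc 1 (k-1), (j:ℤ) * (h * (j:ℤ) / (k:ℤ))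
def DS.V (h : ℤ) (k : ℕ) : ℤ := ∑ j ∈ Finset.Icc 1 (k-1), (h * (j:ℤ) / (k:ℤ))^2
def DS.W (h : ℤ) (k : ℕ) : ℤ := ∑ j ∈ Finset.Icc 1 (k-1), (h * (j:ℤ) / (k:ℤ))
def DS.SAB (h : ℤ) (k : ℕ) : ℤ := ∑ j ∈ Finset.Icc 1 (k-1),
    (2*(j:ℤ) - (k:ℤ)) * (2*h*(j:ℤ) - 2*(k:ℤ)*(h*(j:ℤ)/(k:ℤ)) - (k:ℤ))

lemma DS.W_eq (h : ℤ) (k : ℕ) (hk : 0 < k) (hcop : IsCoprime h (k:ℤ)) :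
    2 * (k:ℤ) * DS.W h k = (h-1)*(k:ℤ)*((k:ℤ)-1) := by
  have hb := DS.sum_emod h k hk hcop id
  simp only [id] at hb
  have e : ∑ j ∈ Finset.Icc 1 (k-1), (h*(j:ℤ) - (k:ℤ)*(h*(j:ℤ)/(k:ℤ)))
      = ∑ j ∈ Finset.Icc 1 (k-1), (j:ℤ) := by
    rw [← hb]
    exact Finset.sum_congr rfl (fun j _ => by rw [Int.emod_def])
  rw [Finset.sum_sub_distrib, ← Finset.mul_sum, ← Finset.mul_sum] at e
  have hs := DS.sum_id (k-1)
  have hc : ((k-1:ℕ):ℤ) = (k:ℤ)-1 := by omega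
  rw [hc] at hs
  unfold DS.W
  linear_combination (-2:ℤ)*e + (h-1)*hs

lemma DS.UV_eq (h : ℤ) (k : ℕ) (hk : 0 < k) (hcop : IsCoprime h (k:ℤ)) :
    12*h*(k:ℤ)*DS.U h k
      = (h^2-1)*(k:ℤ)*((k:ℤ)-1)*(2*(k:ℤ)-1) + 6*(k:ℤ)^2*DS.V h k := by
  have hb := DS.sum_emod h k hk hcop (fun t => t^2)
  beta_reduce at hb
  have e : ∑ j ∈ Finset.Icc 1 (k-1), (h^2*((j:ℤ))^2
        - 2*h*(k:ℤ)*((j:ℤ)*(h*(j:ℤ)/(k:ℤ))) + (k:ℤ)^2*((h*(j:ℤ)/(k:ℤ)))^2)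
      = ∑ j ∈ Finset.Icc 1 (k-1), ((j:ℤ))^2 := by
    rw [← hb]
    refine Finset.sum_congr rfl (fun j _ => ?_)
    rw [Int.emod_def]
    ring
  rw [Finset.sum_add_distrib, Finset.sum_sub_distrib, ← Finset.mul_sum, ← Finset.mul_sum,
    ← Finset.mul_sum] at e
  have hs2 := DS.sum_sq (k-1)
  have hc : ((k-1:ℕ):ℤ) = (k:ℤ)-1 := by omega
  rw [hc] at hs2
  unfold DS.U DS.V
  linear_combination (-6:ℤ)*e + (h^2-1)*hs2

lemma DS.SAB_eq (h : ℤ) (k : ℕ) (hk : 0 < k) (hcop : IsCoprime h (k:ℤ)) :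
    3 * DS.SAB h k = (k:ℤ) * (2*h*((k:ℤ)-1)*(2*(k:ℤ)-1) - 3*(k:ℤ)*((k:ℤ)-1) - 12*DS.U h k) := by
  have hexp : DS.SAB h k = 4*h*(∑ j ∈ Finset.Icc 1 (k-1), ((j:ℤ))^2)
      - 4*(k:ℤ)*DS.U h k - 2*(k:ℤ)*(∑ j ∈ Finset.Icc 1 (k-1), (j:ℤ))
      - 2*h*(k:ℤ)*(∑ j ∈ Finset.Icc 1 (k-1), (j:ℤ)) + 2*(k:ℤ)^2*DS.W h k
      + ((k-1:ℕ):ℤ)*(k:ℤ)^2 := by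
    unfold DS.SAB DS.U DS.W
    rw [show ∑ j ∈ Finset.Icc 1 (k-1),
        (2*(j:ℤ) - (k:ℤ)) * (2*h*(j:ℤ) - 2*(k:ℤ)*(h*(j:ℤ)/(k:ℤ)) - (k:ℤ))
        = ∑ j ∈ Finset.Icc 1 (k-1), (4*h*((j:ℤ))^2 - 4*(k:ℤ)*((j:ℤ)*(h*(j:ℤ)/(k:ℤ)))
          - 2*(k:ℤ)*(j:ℤ) - 2*h*(k:ℤ)*(j:ℤ) + 2*(k:ℤ)^2*(h*(j:ℤ)/(k:ℤ)) + (k:ℤ)^2)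
      from Finset.sum_congr rfl (fun j _ => by ring)]
    rw [Finset.sum_add_distrib, Finset.sum_add_distrib, Finset.sum_sub_distrib,
      Finset.sum_sub_distrib, Finset.sum_sub_distrib, ← Finset.mul_sum, ← Finset.mul_sum,
      ← Finset.mul_sum, ← Finset.mul_sum, ← Finset.mul_sum, Finset.sum_const,
      Nat.card_Icc, nsmul_eq_mul]
    push_cast
    ring
  have hs1 := DS.sum_id (k-1)
  have hs2 := DS.sum_sq (k-1)
  have hW := DS.W_eq h k hk hcop
  have hc : ((k-1:ℕ):ℤ) = (k:ℤ)-1 := by omega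
  rw [hc] at hs1 hs2 hexp
  linear_combination (3:ℤ)*hexp + 2*h*hs2 + 3*(k:ℤ)*hW + (-3)*(k:ℤ)*(1+h)*hs1

lemma DS.sawtooth_int (z : ℤ) : sawtooth (z:ℝ) = 0 := by
  simp [sawtooth]

lemma DS.sawtooth_nonint (t : ℝ) (ht : ¬ ∃ z : ℤ, t = (z:ℝ)) :
    sawtooth t = t - ⌊t⌋ - 1/2 := by
  simp [sawtooth, ht]

lemma DS.ded_eq (h : ℤ) (k : ℕ) (hk : 0 < k) (hcop : IsCoprime h (k:ℤ)) :
    4*(k:ℝ)^2 * dedekindSum h k = ((DS.SAB h k) : ℝ) := by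
  have hkR : (k:ℝ) ≠ 0 := Nat.cast_ne_zero.mpr hk.ne'
  have hins : Finset.Icc 1 k = insert k (Finset.Icc 1 (k-1)) := by
    ext a; simp only [Finset.mem_Icc, Finset.mem_insert]; omega
  have hnot : k ∉ Finset.Icc 1 (k-1) := by simp only [Finset.mem_Icc]; omega
  rw [dedekindSum, hins, Finset.sum_insert hnot]
  have htop : sawtooth ((k:ℝ)/k) = 0 := by
    rw [show (k:ℝ)/k = ((1:ℤ):ℝ) by rw [div_self hkR]; norm_num]
    exact DS.sawtooth_int 1
  rw [htop, zero_mul, zero_add, DS.SAB, Int.cast_sum, Finset.mul_sum]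
  refine Finset.sum_congr rfl (fun j hj => ?_)
  have hjm : 1 ≤ j ∧ j ≤ k - 1 := by simpa [Finset.mem_Icc] using hj
  have nonint1 : ¬ ∃ z : ℤ, (j:ℝ)/(k:ℝ) = (z:ℝ) := by
    rintro ⟨z, hz⟩
    rw [div_eq_iff hkR] at hz
    have hzz : (j:ℤ) = z*(k:ℤ) := by exact_mod_cast hz
    have hd : (k:ℤ) ∣ (j:ℤ) := ⟨z, by linarith⟩
    have := Int.le_of_dvd (by exact_mod_cast hjm.1) hd
    omega
  have f1 : ⌊(j:ℝ)/(k:ℝ)⌋ = 0 := by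
    have h0 := DS.floor_int_div_nat (j:ℤ) k
    rw [show ((j:ℤ):ℝ) = (j:ℝ) by push_cast; ring] at h0
    rw [h0]
    refine Int.ediv_eq_zero_of_lt (by positivity) ?_
    exact_mod_cast (by omega : j < k)
  have st1 : sawtooth ((j:ℝ)/k) = (j:ℝ)/k - 1/2 := by
    rw [DS.sawtooth_nonint _ nonint1, f1]
    norm_num
  have nonint2 : ¬ ∃ z : ℤ, ((h:ℝ)*(j:ℝ))/(k:ℝ) = (z:ℝ) := by
    rintro ⟨z, hz⟩
    apply DS.not_dvd h k hcop j hj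
    rw [div_eq_iff hkR] at hz
    have hzz : h*(j:ℤ) = z*(k:ℤ) := by exact_mod_cast hz
    exact ⟨z, by linarith⟩
  have f2 : ⌊((h:ℝ)*(j:ℝ))/(k:ℝ)⌋ = h*(j:ℤ)/(k:ℤ) := by
    have h0 := DS.floor_int_div_nat (h*(j:ℤ)) k
    rw [show ((h*(j:ℤ):ℤ):ℝ) = (h:ℝ)*(j:ℝ) by push_cast; ring] at h0
    exact h0
  have st2 : sawtooth (((h:ℝ)*(j:ℝ))/k)
      = (h:ℝ)*(j:ℝ)/k - ((h*(j:ℤ)/(k:ℤ) : ℤ):ℝ) - 1/2 := by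
    rw [DS.sawtooth_nonint _ nonint2, f2]
  rw [st1, st2]
  push_cast
  field_simp
  ring

theorem stmt0 (n : ℕ) (hn : 0 < n) (m x : ℤ) (hm : IsCoprime m (n : ℤ))
    (hx : IsCoprime x (n : ℤ)) :
    (∃ z : ℤ, 12 * dedekindSum x n - 12 * dedekindSum m n = (z : ℝ)) ↔
      (n : ℤ) ∣ (x - m) * (x * m - 1) := by
  have hn0 : ((n:ℤ)) ≠ 0 := by exact_mod_cast hn.ne'
  have hkR : (n:ℝ) ≠ 0 := Nat.cast_ne_zero.mpr hn.ne'
  have hdx := DS.ded_eq x n hn hx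
  have hdm := DS.ded_eq m n hn hm
  have hsx := DS.SAB_eq x n hn hx
  have hsm := DS.SAB_eq m n hn hm
  set Cx : ℤ := 2*x*((n:ℤ)-1)*(2*(n:ℤ)-1) - 3*(n:ℤ)*((n:ℤ)-1) - 12*DS.U x n with hCx
  set Cm : ℤ := 2*m*((n:ℤ)-1)*(2*(n:ℤ)-1) - 3*(n:ℤ)*((n:ℤ)-1) - 12*DS.U m n with hCm
  have hsxR : (3:ℝ) * ((DS.SAB x n : ℤ):ℝ) = (n:ℝ) * ((Cx:ℤ):ℝ) := by exact_mod_cast congrArg (fun t : ℤ => (t:ℝ)) hsx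
  have hsmR : (3:ℝ) * ((DS.SAB m n : ℤ):ℝ) = (n:ℝ) * ((Cm:ℤ):ℝ) := by exact_mod_cast congrArg (fun t : ℤ => (t:ℝ)) hsm
  have hdiff : 12 * dedekindSum x n - 12 * dedekindSum m n = ((Cx - Cm : ℤ):ℝ)/n := by
    rw [eq_div_iff hkR]
    apply mul_right_cancel₀ hkR
    push_cast
    linear_combination (3:ℝ)*hdx - 3*hdm + hsxR - hsmR
  have hux := DS.UV_eq x n hn hx
  have hum := DS.UV_eq m n hn hm
  set E : ℤ := (2*(n:ℤ)-3)*(x-m)*(x*m-1) - 6*(m*DS.V x n - x*DS.V m n) with hE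
  have key : (n:ℤ)*(x*m*(Cx - Cm)) = (n:ℤ)*((x-m)*(x*m-1)) + (n:ℤ)^2*E := by
    rw [hCx, hCm, hE]
    linear_combination (-m)*hux + x*hum
  have key2 : x*m*(Cx - Cm) = (x-m)*(x*m-1) + (n:ℤ)*E := by
    apply mul_left_cancel₀ hn0
    linear_combination key
  have hcopnx : IsCoprime (x*m) ((n:ℤ)) := hx.mul_left hm
  constructor
  · rintro ⟨z, hz⟩
    rw [hdiff] at hz
    rw [div_eq_iff hkR] at hz
    have hzz : (Cx - Cm : ℤ) = z * (n:ℤ) := by exact_mod_cast hz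
    have hdvd : (n:ℤ) ∣ Cx - Cm := ⟨z, by linarith⟩
    have h2 : (n:ℤ) ∣ x*m*(Cx - Cm) := Dvd.dvd.mul_left hdvd (x*m)
    rw [key2] at h2
    have h3 := h2.sub (dvd_mul_right (n:ℤ) E)
    rwa [add_sub_cancel_right] at h3
  · intro hdvd
    have h2 : (n:ℤ) ∣ x*m*(Cx-Cm) := by
      rw [key2]
      exact dvd_add hdvd (dvd_mul_right _ _)
    have h3 : (n:ℤ) ∣ Cx - Cm := (hcopnx.symm).dvd_of_dvd_mul_left h2
    obtain ⟨c, hc⟩ := h3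
    refine ⟨c, ?_⟩
    rw [hdiff, hc]
    push_cast
    field_simp
end

section
/- Let p ≥ 3 be prime, k ≥ 1, ε ∈ {1,−1}, and m an integer with m ≡ ε (mod p^{⌈k/2⌉}). Then the number of integers x with 1 ≤ x ≤ p^k and (x−m)(xm−1) ≡ 0 (mod p^k) equals p^{⌊k/2⌋}. -/
/-!
Put `c = ⌈k/2⌉` and `d = p^c`. If `p^k` divides `(x - m)(xm - 1)`, then, `p` being prime and
`2c ≥ k`, `d` divides one of the two factors; since `m ≡ ε (mod d)` and `ε² = 1`, either case gives
`x ≡ ε (mod d)`. Conversely, `x ≡ ε (mod d)` makes both factors divisible by `d`, and `p^k ∣ d²`.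
So the solutions in `[1, p^k]` form a single residue class modulo `d`, which has
`p^k / d = p^⌊k/2⌋` members there.
-/

open Finset

section Prime

variable {M : Type*} [CommMonoidWithZero M] [IsCancelMulZero M] {p a b : M}

theorem Prime.pow_dvd_or_pow_succ_dvd_of_pow_add_dvd_mul (hp : Prime p) {i j : ℕ}
    (h : p ^ (i + j) ∣ a * b) :
    p ^ i ∣ a ∨ p ^ (j + 1) ∣ b := by
  induction i generalizing a with
  | zero => exact Or.inl (pow_zero p ▸ one_dvd a)
  | succ i ih =>
    by_cases hpa : p ∣ a
    · obtain ⟨a, rfl⟩ := hpa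
      rw [add_right_comm, pow_succ', mul_assoc] at h
      exact (ih (mul_dvd_mul_iff_left hp.ne_zero |>.mp h)).imp_left
        fun h => pow_succ' p i ▸ mul_dvd_mul_left p h
    · exact Or.inr <| (pow_dvd_pow p (by omega)).trans (hp.pow_dvd_of_dvd_mul_left _ hpa h)

theorem Prime.pow_half_dvd_or_of_pow_dvd_mul (hp : Prime p) {k : ℕ} (h : p ^ k ∣ a * b) :
    p ^ ((k + 1) / 2) ∣ a ∨ p ^ ((k + 1) / 2) ∣ b := by
  have hk : (k + 1) / 2 + (k - (k + 1) / 2) = k := by omega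
  rw [← hk] at h
  exact (hp.pow_dvd_or_pow_succ_dvd_of_pow_add_dvd_mul h).imp_right
    ((pow_dvd_pow p (by omega)).trans)

end Prime

theorem pow_dvd_sub_mul_mul_sub_one_iff {R : Type*} [CommRing R] [IsDomain R] {p : R}
    (hp : Prime p) {k : ℕ} {ε m : R} (hε : ε * ε = 1) (hm : p ^ ((k + 1) / 2) ∣ m - ε) (x : R) :
    p ^ k ∣ (x - m) * (x * m - 1) ↔ p ^ ((k + 1) / 2) ∣ x - ε := by
  have hxm : x * m - 1 = x * (m - ε) + ε * (x - ε) := by linear_combination hε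
  constructor
  · intro h
    rcases hp.pow_half_dvd_or_of_pow_dvd_mul h with h | h
    · simpa using dvd_add h hm
    · have hxε : x - ε = ε * (x * m - 1) - ε * x * (m - ε) := by linear_combination (-x) * hε
      rw [hxε]
      exact dvd_sub (h.mul_left ε) (hm.mul_left _)
  · intro h
    have hsq : p ^ k ∣ p ^ ((k + 1) / 2) * p ^ ((k + 1) / 2) := by
      rw [← pow_add]; exact pow_dvd_pow p (by omega)
    refine hsq.trans (mul_dvd_mul ?_ ?_)
    · simpa using dvd_sub h hm
    · rw [hxm]; exact dvd_add (hm.mul_left x) (h.mul_left ε)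

theorem Int.card_Icc_filter_dvd_sub {d : ℤ} (hd : 0 < d) (M : ℕ) (r : ℤ) :
    #{x ∈ Icc 1 (d * M) | d ∣ x - r} = M := by
  have hIcc : Icc 1 (d * M) = Ioc 0 (d * M) := by ext; simp only [mem_Icc, mem_Ioc]; omega
  simp_rw [hIcc, ← Int.modEq_iff_dvd, Int.modEq_comm (a := r)]
  rw [← Nat.cast_inj (R := ℤ), Int.Ioc_filter_modEq_card _ _ hd]
  have hshift : ((d : ℚ) * M - r) / d = ((M : ℤ) : ℚ) + -r / d := by
    push_cast; field_simp; ring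
  simp [hshift]

theorem stmt3_general (p : ℕ) (hp : p.Prime) (k : ℕ)
    (ε : ℤ) (hε : ε = 1 ∨ ε = -1) (m : ℤ)
    (hm : m ≡ ε [ZMOD ((p : ℤ) ^ ((k + 1) / 2))]) :
    ((Finset.Icc 1 ((p : ℤ) ^ k)).filter
      (fun x => ((p : ℤ) ^ k) ∣ (x - m) * (x * m - 1))).card = p ^ (k / 2) := by
  have hε2 : ε * ε = 1 := by rcases hε with rfl | rfl <;> norm_num
  have hpk : (p : ℤ) ^ k = (p : ℤ) ^ ((k + 1) / 2) * (p ^ (k / 2) : ℕ) := by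
    rw [Nat.cast_pow, ← pow_add]; congr 1; omega
  rw [filter_congr fun x _ => pow_dvd_sub_mul_mul_sub_one_iff (Nat.prime_iff_prime_int.mp hp)
    hε2 hm.symm.dvd x, hpk]
  exact Int.card_Icc_filter_dvd_sub (pow_pos (mod_cast hp.pos) _) _ ε

theorem stmt3 (p : ℕ) (hp : p.Prime) (hp3 : 3 ≤ p) (k : ℕ) (hk : 1 ≤ k)
    (ε : ℤ) (hε : ε = 1 ∨ ε = -1) (m : ℤ)
    (hm : m ≡ ε [ZMOD ((p : ℤ) ^ ((k + 1) / 2))]) :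
    ((Finset.Icc 1 ((p : ℤ) ^ k)).filter
      (fun x => ((p : ℤ) ^ k) ∣ (x - m) * (x * m - 1))).card = p ^ (k / 2) :=
  stmt3_general p hp k ε hε m hm
end

section
/- Let p ≥ 3 be prime, k ≥ 1, ε ∈ {1,−1}, and m = ε + p^j r with 1 ≤ j < k/2 and p ∤ r. Then the number of integers x with 1 ≤ x ≤ p^k and (x−m)(xm−1) ≡ 0 (mod p^k) equals 2·p^j. -/
lemma countCong (c : ℤ) (hc : 0 < c) (a : ℤ) (M : ℕ) :
    ((Finset.Icc 1 (c * M)).filter (fun x => c ∣ x - a)).card = M := by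
  have hset : (Finset.Icc 1 (c * M)).filter (fun x => c ∣ x - a)
      = (Finset.range M).image (fun i : ℕ => ((a - 1) % c + 1) + c * i) := by
    set b := (a - 1) % c + 1 with hbdef
    have hb1 : 1 ≤ b := by
      have := Int.emod_nonneg (a - 1) hc.ne'
      omega
    have hb2 : b ≤ c := by
      have := Int.emod_lt_of_pos (a - 1) hc
      omega
    have hba : c ∣ b - a := by
      refine ⟨-((a - 1) / c), ?_⟩
      have := Int.mul_ediv_add_emod (a - 1) c
      linarith
    ext x
    simp only [Finset.mem_filter, Finset.mem_Icc, Finset.mem_image, Finset.mem_range]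
    constructor
    · rintro ⟨⟨h1, h2⟩, hd⟩
      have hxb : c ∣ x - b := by
        have : x - b = (x - a) - (b - a) := by ring
        rw [this]; exact dvd_sub hd hba
      obtain ⟨i, hi⟩ := hxb
      have hi0 : 0 ≤ i := by nlinarith
      have hiM : i < M := by nlinarith
      refine ⟨i.toNat, by omega, ?_⟩
      have : (i.toNat : ℤ) = i := Int.toNat_of_nonneg hi0
      rw [this]; linarith
    · rintro ⟨i, hiM, rfl⟩
      have hi : (i : ℤ) ≤ (M : ℤ) - 1 := by
        have : (i : ℤ) < (M : ℤ) := by exact_mod_cast hiM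
        omega
      refine ⟨⟨by nlinarith [Int.natCast_nonneg i], ?_⟩, ?_⟩
      · nlinarith [Int.natCast_nonneg i]
      · have : b + c * i - a = (b - a) + c * i := by ring
        rw [this]; exact dvd_add hba ⟨i, rfl⟩
  rw [hset, Finset.card_image_of_injective _ ?_, Finset.card_range]
  intro i i' h
  simp only at h
  have : (i : ℤ) = i' := mul_left_cancel₀ hc.ne' (by linarith)
  exact_mod_cast this

lemma lemL (p : ℤ) (hp : Prime p) (t : ℕ) :
    ∀ (k : ℕ) (a b : ℤ), p ^ k ∣ a * b → ¬ p ^ (t + 1) ∣ b → p ^ (k - t) ∣ a := by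
  induction t with
  | zero =>
    intro k a b h hb
    have hpb : ¬ p ∣ b := by simpa using hb
    have hc : IsCoprime (p ^ k) b := ((Prime.coprime_iff_not_dvd hp).mpr hpb).pow_left
    simpa using hc.dvd_of_dvd_mul_right h
  | succ t ih =>
    intro k a b h hb
    by_cases hpb : p ∣ b
    · obtain ⟨b', rfl⟩ := hpb
      rcases Nat.eq_zero_or_pos k with rfl | hk
      · simpa using dvd_refl a  -- p^0 = 1 ∣ a; k - (t+1) = 0
      · have hpk : p ^ k = p * p ^ (k - 1) := by
          rw [← pow_succ']; congr 1; omega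
        have h1 : p ^ (k - 1) ∣ a * b' := by
          have h2 : p * p ^ (k - 1) ∣ p * (a * b') := by
            rw [← hpk]; convert h using 1; ring
          exact (mul_dvd_mul_iff_left hp.ne_zero).mp h2
        have hb' : ¬ p ^ (t + 1) ∣ b' := by
          intro hd
          exact hb (by rw [pow_succ']; exact mul_dvd_mul_left p hd)
        have := ih (k - 1) a b' h1 hb'
        convert this using 2
        omega
    · have hc : IsCoprime (p ^ k) b := ((Prime.coprime_iff_not_dvd hp).mpr hpb).pow_left
      exact dvd_trans (pow_dvd_pow p (by omega)) (hc.dvd_of_dvd_mul_right h)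

theorem stmt4 (p : ℕ) (hp : p.Prime) (hp3 : 3 ≤ p) (k : ℕ) (hk : 1 ≤ k)
    (ε : ℤ) (hε : ε = 1 ∨ ε = -1) (j : ℕ) (hj1 : 1 ≤ j) (hj2 : 2 * j < k)
    (r : ℤ) (hr : ¬ (p : ℤ) ∣ r) (m : ℤ) (hm : m = ε + (p : ℤ) ^ j * r) :
    ((Finset.Icc 1 ((p : ℤ) ^ k)).filter
      (fun x => ((p : ℤ) ^ k) ∣ (x - m) * (x * m - 1))).card = 2 * p ^ j := by
  have hpI : Prime ((p : ℤ)) := Nat.prime_iff_prime_int.mp hp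
  have hp0 : (0 : ℤ) < p := by exact_mod_cast hp.pos
  have hp3' : (3 : ℤ) ≤ p := by exact_mod_cast hp3
  set c : ℤ := (p : ℤ) ^ (k - j) with hcdef
  have hc : 0 < c := pow_pos hp0 _
  have hkj : j + 1 ≤ k - j := by omega
  -- p does not divide m
  have hpm : ¬ (p : ℤ) ∣ m := by
    intro hd
    have hε' : (p : ℤ) ∣ ε := by
      have h2 : (p : ℤ) ∣ (p : ℤ) ^ j * r :=
        dvd_mul_of_dvd_left (dvd_pow_self _ (by omega)) r
      have := dvd_sub hd h2
      rw [hm] at this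
      simpa using this
    have h1 : (p : ℤ) ∣ 1 := by
      rcases hε with rfl | rfl
      · exact hε'
      · exact (dvd_neg).mp hε'
    have := Int.le_of_dvd (by norm_num) h1
    omega
  have hcop : ∀ n : ℕ, IsCoprime ((p : ℤ) ^ n) m :=
    fun n => ((Prime.coprime_iff_not_dvd hpI).mpr hpm).pow_left
  -- valuation of m^2 - 1 is exactly j
  have hdvdj : (p : ℤ) ^ j ∣ m ^ 2 - 1 := by
    refine ⟨r * (2 * ε + (p : ℤ) ^ j * r), ?_⟩
    rcases hε with rfl | rfl <;> rw [hm] <;> ring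
  have hnot : ¬ (p : ℤ) ^ (j + 1) ∣ m ^ 2 - 1 := by
    intro hd
    have heq : m ^ 2 - 1 = (p : ℤ) ^ j * (r * (2 * ε + (p : ℤ) ^ j * r)) := by
      rcases hε with rfl | rfl <;> rw [hm] <;> ring
    rw [heq, pow_succ] at hd
    have hpw : (p : ℤ) ∣ r * (2 * ε + (p : ℤ) ^ j * r) :=
      (mul_dvd_mul_iff_left (pow_ne_zero j hp0.ne')).mp hd
    rcases hpI.dvd_mul.mp hpw with h | h
    · exact hr h
    · have h2 : (p : ℤ) ∣ 2 * ε := by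
        have h3 : (p : ℤ) ∣ (p : ℤ) ^ j * r :=
          dvd_mul_of_dvd_left (dvd_pow_self _ (by omega)) r
        have := dvd_sub h h3
        simpa using this
      have h4 : (p : ℤ) ∣ 2 := by
        rcases hε with rfl | rfl
        · simpa using h2
        · have : (p : ℤ) ∣ -(2 : ℤ) := by simpa using h2
          exact (dvd_neg).mp this
      have := Int.le_of_dvd (by norm_num) h4
      omega
  -- the key equivalence
  have hiff : ∀ x : ℤ, ((p : ℤ) ^ k ∣ (x - m) * (x * m - 1)) ↔
      (c ∣ x - m ∨ c ∣ x * m - 1) := by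
    intro x
    constructor
    · intro h
      by_cases h1 : (p : ℤ) ^ (j + 1) ∣ x * m - 1
      · right
        have h2 : ¬ (p : ℤ) ^ (j + 1) ∣ x - m := by
          intro h3
          apply hnot
          have e : m ^ 2 - 1 = (x * m - 1) - m * (x - m) := by ring
          rw [e]
          exact dvd_sub h1 (Dvd.dvd.mul_left h3 m)
        have := lemL (p : ℤ) hpI j k (x * m - 1) (x - m) (by rw [mul_comm] at h; exact h) h2
        exact this
      · left
        exact lemL (p : ℤ) hpI j k (x - m) (x * m - 1) h h1
    · rintro (hA | hB)
      · have e : (x - m) * (x * m - 1) = m * (x - m) ^ 2 + (m ^ 2 - 1) * (x - m) := by ring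
        rw [e]
        refine dvd_add ?_ ?_
        · have h1 : (p : ℤ) ^ k ∣ (x - m) ^ 2 := by
            have h2 : c ^ 2 ∣ (x - m) ^ 2 := pow_dvd_pow_of_dvd hA 2
            refine dvd_trans ?_ h2
            rw [hcdef, ← pow_mul]
            exact pow_dvd_pow _ (by omega)
          exact h1.mul_left m
        · have h3 : (p : ℤ) ^ j * c ∣ (m ^ 2 - 1) * (x - m) := mul_dvd_mul hdvdj hA
          refine dvd_trans (dvd_of_eq ?_) h3
          rw [hcdef, ← pow_add]
          congr 1
          omega
      · have e : m * ((x - m) * (x * m - 1)) = (x * m - 1) ^ 2 - (m ^ 2 - 1) * (x * m - 1) := by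
          ring
        have h4 : (p : ℤ) ^ k ∣ m * ((x - m) * (x * m - 1)) := by
          rw [e]
          refine dvd_sub ?_ ?_
          · have h2 : c ^ 2 ∣ (x * m - 1) ^ 2 := pow_dvd_pow_of_dvd hB 2
            refine dvd_trans ?_ h2
            rw [hcdef, ← pow_mul]
            exact pow_dvd_pow _ (by omega)
          · have h3 : (p : ℤ) ^ j * c ∣ (m ^ 2 - 1) * (x * m - 1) := mul_dvd_mul hdvdj hB
            refine dvd_trans (dvd_of_eq ?_) h3
            rw [hcdef, ← pow_add]
            congr 1
            omega
        exact (hcop k).dvd_of_dvd_mul_left h4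
  -- inverse of m mod c
  obtain ⟨u, v, huv⟩ := hcop (k - j)
  have hBiff : ∀ x : ℤ, (c ∣ x * m - 1) ↔ (c ∣ x - v) := by
    intro x
    have e : x * m - 1 = m * (x - v) + (v * m - 1) := by ring
    have hv : c ∣ v * m - 1 := ⟨-u, by linarith⟩
    constructor
    · intro h
      have h2 : c ∣ m * (x - v) := by
        have : m * (x - v) = (x * m - 1) - (v * m - 1) := by ring
        rw [this]; exact dvd_sub h hv
      exact (hcop (k - j)).dvd_of_dvd_mul_left h2
    · intro h
      rw [e]
      exact dvd_add (h.mul_left m) hv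
  have hdisj : Disjoint
      ((Finset.Icc 1 ((p : ℤ) ^ k)).filter (fun x => c ∣ x - m))
      ((Finset.Icc 1 ((p : ℤ) ^ k)).filter (fun x => c ∣ x * m - 1)) := by
    rw [Finset.disjoint_left]
    intro x hx1 hx2
    have h1 : c ∣ x - m := (Finset.mem_filter.mp hx1).2
    have h2 : c ∣ x * m - 1 := (Finset.mem_filter.mp hx2).2
    apply hnot
    have e : m ^ 2 - 1 = (x * m - 1) - m * (x - m) := by ring
    have h3 : c ∣ m ^ 2 - 1 := by
      rw [e]; exact dvd_sub h2 (h1.mul_left m)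
    exact dvd_trans (pow_dvd_pow _ hkj) h3
  have hIcc : ((p : ℤ)) ^ k = c * ((p ^ j : ℕ) : ℤ) := by
    rw [hcdef]
    push_cast
    rw [← pow_add]
    congr 1
    omega
  have hsplit : (Finset.Icc 1 ((p : ℤ) ^ k)).filter
        (fun x => ((p : ℤ) ^ k) ∣ (x - m) * (x * m - 1))
      = (Finset.Icc 1 ((p : ℤ) ^ k)).filter (fun x => c ∣ x - m) ∪
        (Finset.Icc 1 ((p : ℤ) ^ k)).filter (fun x => c ∣ x * m - 1) := by
    rw [← Finset.filter_or]
    exact Finset.filter_congr (fun x _ => hiff x)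
  rw [hsplit, Finset.card_union_of_disjoint hdisj]
  have hA : ((Finset.Icc 1 ((p : ℤ) ^ k)).filter (fun x => c ∣ x - m)).card = p ^ j := by
    rw [hIcc]
    exact countCong c hc m (p ^ j)
  have hB : ((Finset.Icc 1 ((p : ℤ) ^ k)).filter (fun x => c ∣ x * m - 1)).card = p ^ j := by
    rw [Finset.filter_congr (fun x _ => hBiff x), hIcc]
    exact countCong c hc v (p ^ j)
  rw [hA, hB]
  ring
end

section
/- Let p be any prime (including p = 2), k ≥ 1, ε ∈ {1,−1}, m ≡ ε (mod p^{⌈k/2⌉}), and let x be an integer. Then (x−m)(xm−1) ≡ 0 (mod p^k) if and only if x ≡ ε (mod p^{⌈k/2⌉}). -/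
/-!
Put `q = p ^ ⌈k/2⌉`. Since `m ≡ ε` and `ε² = 1`, `q ∣ m² - 1`; so `m` is a unit modulo `q`,
and `x m - 1 = m (x - m) + (m² - 1)` shows that `q` divides `x - m` iff it divides `x m - 1`.
As `2 ⌈k/2⌉ ≤ k + 1`, `p ^ k ∣ a b` forces `q ∣ a` or `q ∣ b`, so `p ^ k ∣ (x - m)(x m - 1)`
forces `q ∣ x - m`; conversely `q ∣ x - m` gives `q² ∣ (x - m)(x m - 1)`, and `k ≤ 2 ⌈k/2⌉`.
-/

theorem Prime.pow_dvd_or_pow_dvd_of_pow_dvd_mul {α : Type*} [CommMonoidWithZero α]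
    [IsCancelMulZero α] {p a b : α} (hp : Prime p) {k c : ℕ} (hck : 2 * c ≤ k + 1)
    (h : p ^ k ∣ a * b) :
    p ^ c ∣ a ∨ p ^ c ∣ b := by
  by_contra! ⟨ha, hb⟩
  have hk : (k : ℕ∞) ≤ emultiplicity p a + emultiplicity p b :=
    emultiplicity_mul hp ▸ le_emultiplicity_of_pow_dvd h
  have ha' := emultiplicity_lt_iff_not_dvd.mpr ha
  have hb' := emultiplicity_lt_iff_not_dvd.mpr hb
  lift emultiplicity p a to ℕ using ha'.ne_top with i
  lift emultiplicity p b to ℕ using hb'.ne_top with j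
  norm_cast at hk ha' hb'
  omega

theorem IsCoprime.of_dvd_mul_self_sub_one {R : Type*} [CommRing R] {q m : R}
    (h : q ∣ m * m - 1) : IsCoprime q m := by
  obtain ⟨t, ht⟩ := h
  exact ⟨-t, m, by linear_combination ht⟩

theorem dvd_sub_iff_dvd_mul_sub_one {R : Type*} [CommRing R] {q m x : R}
    (h : q ∣ m * m - 1) : q ∣ x - m ↔ q ∣ x * m - 1 := by
  have hsplit : x * m - 1 = m * (x - m) + (m * m - 1) := by ring
  rw [hsplit, dvd_add_left h]
  exact ⟨(·.mul_left m), (IsCoprime.of_dvd_mul_self_sub_one h).dvd_of_dvd_mul_left⟩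

theorem stmt5_general (p : ℕ) (hp : p.Prime) (k : ℕ)
    (ε : ℤ) (hε : ε = 1 ∨ ε = -1) (m : ℤ)
    (hm : m ≡ ε [ZMOD ((p : ℤ) ^ ((k + 1) / 2))]) (x : ℤ) :
    ((p : ℤ) ^ k) ∣ (x - m) * (x * m - 1) ↔ x ≡ ε [ZMOD ((p : ℤ) ^ ((k + 1) / 2))] := by
  set c := (k + 1) / 2
  have hεε : ε * ε = 1 := by rcases hε with rfl | rfl <;> norm_num
  have hmm : (p : ℤ) ^ c ∣ m * m - 1 := hεε ▸ (hm.mul hm).symm.dvd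
  have hxm : x ≡ ε [ZMOD (p : ℤ) ^ c] ↔ (p : ℤ) ^ c ∣ x - m :=
    ⟨fun hx => (hm.trans hx.symm).dvd, fun hx => (Int.modEq_iff_dvd.mpr hx).symm.trans hm⟩
  rw [hxm]
  constructor
  · intro h
    have hpZ : Prime (p : ℤ) := Nat.prime_iff_prime_int.mp hp
    rcases hpZ.pow_dvd_or_pow_dvd_of_pow_dvd_mul (c := c) (by omega) h with hx | hx
    · exact hx
    · exact (dvd_sub_iff_dvd_mul_sub_one hmm).mpr hx
  · intro hx
    calc (p : ℤ) ^ k ∣ (p : ℤ) ^ c * (p : ℤ) ^ c := by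
          rw [← pow_add]; exact pow_dvd_pow _ (by omega)
      _ ∣ (x - m) * (x * m - 1) := mul_dvd_mul hx ((dvd_sub_iff_dvd_mul_sub_one hmm).mp hx)

theorem stmt5 (p : ℕ) (hp : p.Prime) (k : ℕ) (hk : 1 ≤ k)
    (ε : ℤ) (hε : ε = 1 ∨ ε = -1) (m : ℤ)
    (hm : m ≡ ε [ZMOD ((p : ℤ) ^ ((k + 1) / 2))]) (x : ℤ) :
    ((p : ℤ) ^ k) ∣ (x - m) * (x * m - 1) ↔ x ≡ ε [ZMOD ((p : ℤ) ^ ((k + 1) / 2))] :=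
  stmt5_general p hp k ε hε m hm x
end

section
/- Let k ≥ 1, ε ∈ {1,−1}, and m an odd integer with m ≡ ε (mod 2^{⌈k/2⌉}). Then the number of integers x with 1 ≤ x ≤ 2^k and (x−m)(xm−1) ≡ 0 (mod 2^k) equals 2^{⌊k/2⌋}. -/
open Finset

lemma count_dvd_sub (D : ℤ) (hD : 0 < D) (M : ℕ) (a : ℤ) :
    ((Finset.Icc 1 (D * M)).filter (fun x => D ∣ x - a)).card = M := by
  set r : ℤ := (a - 1) % D + 1 with hr
  have hr1 : 1 ≤ r := by
    have := Int.emod_nonneg (a - 1) hD.ne'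
    omega
  have hr2 : r ≤ D := by
    have := Int.emod_lt_of_pos (a - 1) hD
    omega
  have hra : D ∣ r - a := by
    refine ⟨-((a - 1) / D), ?_⟩
    have h1 : (a - 1) % D = a - 1 - D * ((a - 1) / D) := Int.emod_def _ _
    rw [hr, h1]; ring
  have hiff : ∀ x : ℤ, (D ∣ x - a) ↔ (D ∣ x - r) := by
    intro x
    constructor
    · intro h
      have h2 : x - r = (x - a) - (r - a) := by ring
      rw [h2]; exact dvd_sub h hra
    · intro h
      have h2 : x - a = (x - r) + (r - a) := by ring
      rw [h2]; exact dvd_add h hra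
  rw [Finset.filter_congr (fun x _ => hiff x)]
  have hcard : ((Finset.Icc 1 (D * M)).filter (fun x => D ∣ x - r)).card
      = (Finset.range M).card := by
    apply Finset.card_bij' (fun x _ => ((x - r) / D).toNat) (fun j _ => r + D * j)
    · intro x hx
      simp only [Finset.mem_filter, Finset.mem_Icc] at hx
      obtain ⟨⟨hx1, hx2⟩, q, hq⟩ := hx
      have hq0 : 0 ≤ q := by
        by_contra hq0
        push_neg at hq0
        have : D * q ≤ D * (-1) := by
          apply mul_le_mul_of_nonneg_left (by omega) hD.le
        omega
      have hqM : q < M := by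
        by_contra hqM
        push_neg at hqM
        have : D * (M : ℤ) ≤ D * q := mul_le_mul_of_nonneg_left hqM hD.le
        omega
      rw [hq, Int.mul_ediv_cancel_left _ hD.ne']
      simp only [Finset.mem_range]
      omega
    · intro j hj
      simp only [Finset.mem_range] at hj
      simp only [Finset.mem_filter, Finset.mem_Icc]
      have hj0 : (0:ℤ) ≤ D * j := by positivity
      have hjle : (j:ℤ) ≤ (M:ℤ) - 1 := by omega
      have hjM : D * (j:ℤ) ≤ D * ((M:ℤ) - 1) :=
        mul_le_mul_of_nonneg_left hjle hD.le
      have hDM : D * ((M:ℤ) - 1) = D * M - D := by ring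
      refine ⟨⟨by omega, by omega⟩, ⟨j, by ring⟩⟩
    · intro x hx
      simp only [Finset.mem_filter, Finset.mem_Icc] at hx
      obtain ⟨⟨hx1, hx2⟩, q, hq⟩ := hx
      have hq0 : 0 ≤ q := by
        by_contra hq0
        push_neg at hq0
        have : D * q ≤ D * (-1) := by
          apply mul_le_mul_of_nonneg_left (by omega) hD.le
        omega
      rw [hq, Int.mul_ediv_cancel_left _ hD.ne']
      rw [Int.toNat_of_nonneg hq0]
      omega
    · intro j hj
      have : (r + D * j - r) / D = j := by
        rw [show r + D * (j:ℤ) - r = D * j by ring, Int.mul_ediv_cancel_left _ hD.ne']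
      rw [this]
      simp
  rw [hcard, Finset.card_range]

theorem stmt6 (k : ℕ) (hk : 1 ≤ k) (ε : ℤ) (hε : ε = 1 ∨ ε = -1)
    (m : ℤ) (hodd : Odd m) (hm : m ≡ ε [ZMOD ((2 : ℤ) ^ ((k + 1) / 2))]) :
    ((Finset.Icc 1 ((2 : ℤ) ^ k)).filter
      (fun x => ((2 : ℤ) ^ k) ∣ (x - m) * (x * m - 1))).card = 2 ^ (k / 2) := by
  set c := (k + 1) / 2 with hc
  set f := k / 2 with hf
  have hcf : c + f = k := by omega
  have hk2c : k ≤ 2 * c := by omega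
  have hdvd : (2:ℤ)^c ∣ ε - m := Int.ModEq.dvd hm
  obtain ⟨t, ht⟩ := hdvd
  have hm2 : m = ε - 2^c * t := by linarith
  have hmodd : ¬ (2:ℤ) ∣ m := by
    obtain ⟨j, hj⟩ := hodd
    rintro ⟨s, hs⟩
    omega
  have key : ∀ x : ℤ, ((2:ℤ)^k ∣ (x - m) * (x * m - 1)) ↔ (2:ℤ)^c ∣ x - ε := by
    intro x
    have hid : (x - m) * (x * m - 1) = (x - ε)^2 * m - (2^c * t)^2 * x := by
      rw [hm2]; rcases hε with h | h <;> subst h <;> ring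
    have hd2 : (2:ℤ)^k ∣ (2^c * t)^2 * x := by
      have h1 : (2:ℤ)^k ∣ ((2:ℤ)^c)^2 := by
        rw [← pow_mul]; exact pow_dvd_pow 2 (by omega)
      have h2 : ((2:ℤ)^c * t)^2 * x = ((2:ℤ)^c)^2 * (t^2 * x) := by ring
      rw [h2]; exact h1.mul_right _
    constructor
    · intro h
      have hsq : (2:ℤ)^k ∣ (x - ε)^2 * m := by
        have h3 := dvd_add h hd2
        rwa [hid, sub_add_cancel] at h3
      have hsq2 : (2:ℤ)^k ∣ (x - ε)^2 :=
        Int.prime_two.pow_dvd_of_dvd_mul_right _ hmodd hsq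
      set y := x - ε with hy
      rcases eq_or_ne y 0 with h0 | h0
      · simp [h0]
      · have hny : y.natAbs ≠ 0 := by simpa using h0
        have hn : (2:ℕ)^k ∣ y.natAbs ^ 2 := by
          have h4 := Int.natAbs_dvd_natAbs.mpr hsq2
          simpa [Int.natAbs_pow] using h4
        have hfac : k ≤ (y.natAbs ^ 2).factorization 2 :=
          (Nat.Prime.pow_dvd_iff_le_factorization Nat.prime_two (pow_ne_zero 2 hny)).mp hn
        rw [Nat.factorization_pow] at hfac
        simp only [Finsupp.smul_apply, smul_eq_mul] at hfac
        have hcle : c ≤ y.natAbs.factorization 2 := by omega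
        have h5 : (2:ℕ)^c ∣ y.natAbs :=
          (Nat.Prime.pow_dvd_iff_le_factorization Nat.prime_two hny).mpr hcle
        have h6 := Int.natCast_dvd_natCast.mpr h5
        rw [Int.dvd_natAbs] at h6
        exact_mod_cast h6
    · intro h
      rw [hid]
      apply dvd_sub _ hd2
      have h1 : (2:ℤ)^k ∣ (x - ε)^2 := by
        obtain ⟨s, hs⟩ := h
        have : (x - ε)^2 = ((2:ℤ)^c)^2 * s^2 := by rw [hs]; ring
        rw [this, ← pow_mul]
        exact Dvd.dvd.mul_right (pow_dvd_pow 2 (by omega)) _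
      exact h1.mul_right _
  rw [Finset.filter_congr (fun x _ => key x)]
  have hN : (2:ℤ)^k = 2^c * ((2^f : ℕ) : ℤ) := by
    push_cast
    rw [← pow_add, hcf]
  rw [hN, count_dvd_sub _ (by positivity) (2^f) ε]
end

section
/- Let k be a positive integer, ε ∈ {1,−1}, and m = ε + 2^j r with 2 ≤ j < k/2 − 1 and r odd. Then the number of integers x with 1 ≤ x ≤ 2^k and (x−m)(xm−1) ≡ 0 (mod 2^k) equals 2^{j+2}. -/
private lemma pow_cancel {p : ℤ} (hp : Prime p) (c : ℕ) {d : ℕ} :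
    ∀ {a b : ℤ}, p ^ (c + d) ∣ a * b → ¬ p ^ (c + 1) ∣ a → p ^ d ∣ b := by
  induction c with
  | zero =>
    intro a b h ha
    rw [pow_one] at ha
    rw [zero_add] at h
    exact ((hp.coprime_iff_not_dvd.mpr ha).pow_left).dvd_of_dvd_mul_left h
  | succ c ih =>
    intro a b h ha
    by_cases hpa : p ∣ a
    · obtain ⟨a', rfl⟩ := hpa
      have hne : p ≠ 0 := hp.ne_zero
      have h' : p ^ (c + d) ∣ a' * b := by
        have h2 : p * p ^ (c + d) ∣ p * (a' * b) := by
          have e1 : p * p ^ (c + d) = p ^ (c + 1 + d) := by ring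
          have e2 : p * (a' * b) = p * a' * b := by ring
          rw [e1, e2]; exact h
        exact (mul_dvd_mul_iff_left hne).mp h2
      have ha' : ¬ p ^ (c + 1) ∣ a' := by
        intro hc
        have e : p ^ (c + 1 + 1) = p * p ^ (c + 1) := by ring
        exact ha (by rw [e]; exact mul_dvd_mul_left p hc)
      exact ih h' ha'
    · have hcop : IsCoprime (p ^ (c + 1 + d)) a :=
        ((hp.coprime_iff_not_dvd.mpr hpa).pow_left)
      have hb : p ^ (c + 1 + d) ∣ b := hcop.dvd_of_dvd_mul_left h
      exact dvd_trans (pow_dvd_pow p (by omega)) hb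

private lemma count_lemma (d c : ℤ) (t : ℕ) (hd : 0 < d) :
    ((Finset.Icc 1 (d * t)).filter (fun x => d ∣ x - c)).card = t := by
  classical
  set e : ℤ := (c - 1) % d + 1 with he
  have he1 : 1 ≤ e := by have := Int.emod_nonneg (c - 1) hd.ne'; omega
  have he2 : e ≤ d := by have := Int.emod_lt_of_pos (c - 1) hd; omega
  have hdc : d ∣ e - c := by
    refine ⟨-((c - 1) / d), ?_⟩
    have := Int.emod_def (c - 1) d
    rw [he]
    linarith
  have himg : (Finset.Icc 1 (d * t)).filter (fun x => d ∣ x - c)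
      = (Finset.range t).image (fun i : ℕ => e + d * i) := by
    ext x
    simp only [Finset.mem_filter, Finset.mem_Icc, Finset.mem_image, Finset.mem_range]
    constructor
    · rintro ⟨⟨hx1, hx2⟩, hdvd⟩
      have hde : d ∣ x - e := by
        have : x - e = (x - c) - (e - c) := by ring
        rw [this]; exact dvd_sub hdvd hdc
      obtain ⟨i, hi⟩ := hde
      have hi0 : 0 ≤ i := by nlinarith
      have hit : i < (t : ℤ) := by nlinarith
      refine ⟨i.toNat, by omega, ?_⟩
      have : ((i.toNat : ℤ)) = i := Int.toNat_of_nonneg hi0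
      rw [this]
      linarith
    · rintro ⟨i, hit, rfl⟩
      have hi0 : (0 : ℤ) ≤ i := Int.ofNat_nonneg i
      have hit' : (i : ℤ) ≤ (t : ℤ) - 1 := by
        have : (i : ℤ) < (t : ℤ) := by exact_mod_cast hit
        omega
      refine ⟨⟨by nlinarith, by nlinarith⟩, ?_⟩
      have : e + d * i - c = (e - c) + d * i := by ring
      rw [this]
      exact dvd_add hdc ⟨i, rfl⟩
  rw [himg, Finset.card_image_of_injective, Finset.card_range]
  intro i1 i2 hi
  have : (i1 : ℤ) = i2 := by
    have h1 : d * (i1 : ℤ) = d * (i2 : ℤ) := by dsimp at hi; linarith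
    exact mul_left_cancel₀ hd.ne' h1
  exact_mod_cast this

theorem stmt7 (k : ℕ) (hk : 1 ≤ k) (ε : ℤ) (hε : ε = 1 ∨ ε = -1)
    (j : ℕ) (hj1 : 2 ≤ j) (hj2 : 2 * j + 2 < k)
    (r : ℤ) (hr : Odd r) (m : ℤ) (hm : m = ε + (2 : ℤ) ^ j * r) :
    ((Finset.Icc 1 ((2 : ℤ) ^ k)).filter
      (fun x => ((2 : ℤ) ^ k) ∣ (x - m) * (x * m - 1))).card = 2 ^ (j + 2) := by
  classical
  have hp : Prime (2 : ℤ) := Int.prime_two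
  -- set up s with k = (j+1) + s, j + 2 ≤ s
  set s : ℕ := k - (j + 1) with hs
  have hks : k = (j + 1) + s := by omega
  have hs2 : j + 2 ≤ s := by omega
  obtain ⟨j', rfl⟩ : ∃ j', j = j' + 2 := ⟨j - 2, by omega⟩
  -- m is odd
  have hModd : Odd m := by
    rcases hε with rfl | rfl
    · exact ⟨2 ^ (j' + 1) * r, by rw [hm]; ring⟩
    · exact ⟨2 ^ (j' + 1) * r - 1, by rw [hm]; ring⟩
  obtain ⟨n, hn⟩ := hModd
  have hcop2 : IsCoprime (2 : ℤ) m := ⟨-n, 1, by rw [hn]; ring⟩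
  -- m^2 - 1 = 2^(j+1) * (odd)
  have hw : Odd (r * (ε + 2 ^ (j' + 1) * r)) := by
    refine hr.mul ?_
    rcases hε with rfl | rfl
    · exact ⟨2 ^ j' * r, by ring⟩
    · exact ⟨2 ^ j' * r - 1, by ring⟩
  have hM : m ^ 2 - 1 = 2 ^ (j' + 2 + 1) * (r * (ε + 2 ^ (j' + 1) * r)) := by
    rcases hε with rfl | rfl <;> (rw [hm]; ring)
  have hM21 : (2 : ℤ) ^ (j' + 2 + 1) ∣ m ^ 2 - 1 := ⟨_, hM⟩
  have hodd1 : ¬ (2 : ℤ) ^ (j' + 2 + 2) ∣ m ^ 2 - 1 := by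
    rintro ⟨q, hq⟩
    rw [hM] at hq
    have h2 : (2 : ℤ) ∣ r * (ε + 2 ^ (j' + 1) * r) := by
      have hpow : (0 : ℤ) < 2 ^ (j' + 2 + 1) := by positivity
      refine ⟨q, mul_left_cancel₀ hpow.ne' ?_⟩
      rw [hq]; ring
    obtain ⟨q2, hq2⟩ := h2
    obtain ⟨w2, hw2⟩ := hw
    omega
  -- inverse of m mod 2^s
  obtain ⟨a, b, hab⟩ := (hcop2.pow_left : IsCoprime ((2:ℤ) ^ s) m)
  have hub : (2 : ℤ) ^ s ∣ m * b - 1 := ⟨-a, by linear_combination hab⟩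
  have hcops : IsCoprime ((2:ℤ) ^ s) m := hcop2.pow_left
  have hcopj : IsCoprime ((2:ℤ) ^ (j' + 2 + 1)) m := hcop2.pow_left
  -- key equivalence
  have key : ∀ x : ℤ, (2 : ℤ) ^ k ∣ (x - m) * (x * m - 1) ↔
      ((2 : ℤ) ^ s ∣ x - m ∨ (2 : ℤ) ^ s ∣ x - b) := by
    intro x
    have hid : x * m - 1 = m * (x - m) + (m ^ 2 - 1) := by ring
    have hid2 : x * m - 1 = m * (x - b) + (m * b - 1) := by ring
    have hbiff : (2 : ℤ) ^ s ∣ x * m - 1 ↔ (2 : ℤ) ^ s ∣ x - b := by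
      constructor
      · intro h
        have : (2:ℤ) ^ s ∣ m * (x - b) := by
          have : m * (x - b) = (x * m - 1) - (m * b - 1) := by ring
          rw [this]; exact dvd_sub h hub
        exact hcops.dvd_of_dvd_mul_left this
      · intro h
        rw [hid2]
        exact dvd_add ((h.mul_left m)) hub
    rw [← hbiff]
    constructor
    · intro h
      by_contra hcon
      push_neg at hcon
      obtain ⟨hA, hB⟩ := hcon
      have hk' : (2:ℤ) ^ ((j' + 2 + 1) + s) ∣ (x - m) * (x * m - 1) := by
        rwa [show (j' + 2 + 1) + s = k by omega]
      have hcase : ¬ (2:ℤ) ^ (j' + 2 + 2) ∣ (x - m) ∨ ¬ (2:ℤ) ^ (j' + 2 + 2) ∣ (x * m - 1) := by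
        by_contra hcc
        push_neg at hcc
        obtain ⟨h1, h2⟩ := hcc
        have : (2:ℤ) ^ (j' + 2 + 2) ∣ m ^ 2 - 1 := by
          have heq : m ^ 2 - 1 = (x * m - 1) - m * (x - m) := by ring
          rw [heq]
          exact dvd_sub h2 (h1.mul_left m)
        exact hodd1 this
      rcases hcase with hc | hc
      · exact hB (pow_cancel hp (j' + 2 + 1) hk' hc)
      · refine hA (pow_cancel hp (j' + 2 + 1) ?_ hc)
        rwa [mul_comm] at hk'
    · rintro (h | h)
      · have h1 : (2:ℤ) ^ (j' + 2 + 1) ∣ x - m := dvd_trans (pow_dvd_pow 2 (by omega)) h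
        have h2 : (2:ℤ) ^ (j' + 2 + 1) ∣ x * m - 1 := by
          rw [hid]; exact dvd_add (h1.mul_left m) hM21
        rw [show k = s + (j' + 2 + 1) by omega, pow_add]
        exact mul_dvd_mul h h2
      · have h1 : (2:ℤ) ^ (j' + 2 + 1) ∣ m * (x - m) := by
          have heq : m * (x - m) = (x * m - 1) - (m ^ 2 - 1) := by ring
          rw [heq]
          exact dvd_sub (dvd_trans (pow_dvd_pow 2 (by omega)) h) hM21
        have h2 : (2:ℤ) ^ (j' + 2 + 1) ∣ x - m := hcopj.dvd_of_dvd_mul_left h1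
        rw [show k = (j' + 2 + 1) + s by omega, pow_add]
        exact mul_dvd_mul h2 h
  -- rewrite the filter
  have hfilter : (Finset.Icc 1 ((2 : ℤ) ^ k)).filter
      (fun x => ((2 : ℤ) ^ k) ∣ (x - m) * (x * m - 1))
      = (Finset.Icc 1 ((2 : ℤ) ^ k)).filter
        (fun x => (2 : ℤ) ^ s ∣ x - m ∨ (2 : ℤ) ^ s ∣ x - b) := by
    apply Finset.filter_congr
    intro x _
    simpa using key x
  rw [hfilter, Finset.filter_or]
  have hdisj : Disjoint
      ((Finset.Icc 1 ((2 : ℤ) ^ k)).filter (fun x => (2 : ℤ) ^ s ∣ x - m))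
      ((Finset.Icc 1 ((2 : ℤ) ^ k)).filter (fun x => (2 : ℤ) ^ s ∣ x - b)) := by
    rw [Finset.disjoint_left]
    intro x hx1 hx2
    have h1 := (Finset.mem_filter.mp hx1).2
    have h2 := (Finset.mem_filter.mp hx2).2
    have hbm : (2:ℤ) ^ s ∣ b - m := by
      have heq : b - m = (x - m) - (x - b) := by ring
      rw [heq]; exact dvd_sub h1 h2
    have : (2:ℤ) ^ s ∣ m ^ 2 - 1 := by
      have heq : m ^ 2 - 1 = (m * b - 1) - m * (b - m) := by ring
      rw [heq]
      exact dvd_sub hub (hbm.mul_left m)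
    exact hodd1 (dvd_trans (pow_dvd_pow 2 (by omega)) this)
  rw [Finset.card_union_of_disjoint hdisj]
  have hIcc : (2 : ℤ) ^ k = (2:ℤ) ^ s * ((2 ^ (j' + 2 + 1) : ℕ) : ℤ) := by
    push_cast
    rw [← pow_add]
    congr 1
    omega
  have hd : (0:ℤ) < 2 ^ s := by positivity
  have hc1 : ((Finset.Icc 1 ((2 : ℤ) ^ k)).filter (fun x => (2 : ℤ) ^ s ∣ x - m)).card
      = 2 ^ (j' + 2 + 1) := by
    rw [hIcc]; exact count_lemma _ m _ hd
  have hc2 : ((Finset.Icc 1 ((2 : ℤ) ^ k)).filter (fun x => (2 : ℤ) ^ s ∣ x - b)).card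
      = 2 ^ (j' + 2 + 1) := by
    rw [hIcc]; exact count_lemma _ b _ hd
  rw [hc1, hc2]
  ring
end

section
/- Let k be a positive even integer, ε ∈ {1,−1}, and m = ε + 2^j r with j = k/2 − 1 ≥ 2 and r odd. Then the number of integers x with 1 ≤ x ≤ 2^k and (x−m)(xm−1) ≡ 0 (mod 2^k) equals 2^{j+1}. -/
-- Core arithmetic lemma: valuation argument
lemma coreA (p : ℕ) (a m u : ℤ) (hm : Odd m) (hu : Odd u) :
    (2:ℤ)^(2*p+6) ∣ a * (a*m + 2^(p+3)*u) ↔ (2:ℤ)^(p+3) ∣ a := by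
  constructor
  · intro H
    have key : ∀ i, i ≤ p + 3 → (2:ℤ)^i ∣ a := by
      intro i
      induction i with
      | zero => intro _; simp
      | succ i ih =>
        intro hi
        have hi' : i ≤ p + 2 := by omega
        obtain ⟨c, hc⟩ := ih (by omega)
        have hexp : a * (a*m + 2^(p+3)*u)
            = 2^(2*i) * (c^2*m) + 2^(i+p+3) * (c*u) := by
          subst hc; ring
        have h1 : (2:ℤ)^(2*i+1) ∣ 2^(2*i) * (c^2*m) := by
          have d1 : (2:ℤ)^(2*i+1) ∣ a * (a*m + 2^(p+3)*u) :=
            dvd_trans (pow_dvd_pow 2 (by omega)) H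
          have d2 : (2:ℤ)^(2*i+1) ∣ 2^(i+p+3) * (c*u) :=
            dvd_mul_of_dvd_left (pow_dvd_pow 2 (by omega)) _
          have := dvd_sub d1 d2
          rwa [hexp, add_sub_cancel_right] at this
        have h2 : (2:ℤ) ∣ c^2*m := by
          have h3 : (2:ℤ)^(2*i) * 2 ∣ 2^(2*i) * (c^2*m) := by
            rwa [pow_succ] at h1
          exact (mul_dvd_mul_iff_left (pow_ne_zero (2*i) (two_ne_zero))).mp h3
        have hc2 : (2:ℤ) ∣ c := by
          rcases (Int.prime_two.dvd_mul.mp h2) with h | h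
          · exact Int.prime_two.dvd_of_dvd_pow h
          · obtain ⟨t, ht⟩ := h
            obtain ⟨s, hs⟩ := hm
            omega
        obtain ⟨c', hc'⟩ := hc2
        exact ⟨c', by rw [hc, hc', pow_succ]; ring⟩
    exact key (p+3) le_rfl
  · rintro ⟨b, hb⟩
    exact ⟨b*(b*m) + b*u, by subst hb; ring⟩

-- Counting lemma
lemma coreB (d : ℤ) (hd : 0 < d) (n : ℕ) (m : ℤ) :
    ((Finset.Icc 1 (d * (n:ℤ))).filter (fun x => d ∣ x - m)).card = n := by
  set r0 := (m - 1) % d with hr0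
  have hr0nn : 0 ≤ r0 := Int.emod_nonneg _ (ne_of_gt hd)
  have hr0lt : r0 < d := Int.emod_lt_of_pos _ hd
  have hdvd0 : m - 1 - r0 = d * ((m-1)/d) := by
    have := Int.mul_ediv_add_emod (m-1) d
    linarith
  have himg : (Finset.Icc 1 (d * (n:ℤ))).filter (fun x => d ∣ x - m)
      = (Finset.range n).image (fun i : ℕ => r0 + 1 + d * i) := by
    ext x
    simp only [Finset.mem_filter, Finset.mem_Icc, Finset.mem_image, Finset.mem_range]
    constructor
    · rintro ⟨⟨hx1, hx2⟩, hdx⟩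
      have hdvd : d ∣ x - 1 - r0 := by
        have : x - 1 - r0 = (x - m) + (m - 1 - r0) := by ring
        rw [this, hdvd0]
        exact dvd_add hdx ⟨_, rfl⟩
      obtain ⟨q, hq⟩ := hdvd
      have hq0 : 0 ≤ q := by
        by_contra h
        push_neg at h
        have : d * q ≤ d * (-1) := by
          apply mul_le_mul_of_nonneg_left _ hd.le
          omega
        omega
      have hqn : q < (n:ℤ) := by
        by_contra h
        push_neg at h
        have : d * (n:ℤ) ≤ d * q := mul_le_mul_of_nonneg_left h hd.le
        omega
      refine ⟨q.toNat, by omega, ?_⟩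
      have : (q.toNat : ℤ) = q := Int.toNat_of_nonneg hq0
      rw [this]; omega
    · rintro ⟨i, hi, rfl⟩
      have hi' : (i:ℤ) ≤ (n:ℤ) - 1 := by omega
      have h1 : d * (i:ℤ) ≥ 0 := mul_nonneg hd.le (by positivity)
      have h2 : d * (i:ℤ) ≤ d * ((n:ℤ) - 1) := mul_le_mul_of_nonneg_left hi' hd.le
      refine ⟨⟨by omega, by nlinarith⟩, ?_⟩
      have : r0 + 1 + d * i - m = d * i - (m - 1 - r0) := by ring
      rw [this, hdvd0]
      exact dvd_sub ⟨_, rfl⟩ ⟨_, rfl⟩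
  rw [himg, Finset.card_image_of_injOn, Finset.card_range]
  intro i _ i' _ h
  simp only at h
  have : d * (i:ℤ) = d * (i':ℤ) := by omega
  have := mul_left_cancel₀ (ne_of_gt hd) this
  exact_mod_cast this

theorem stmt8 (k : ℕ) (hk : 1 ≤ k) (ε : ℤ) (hε : ε = 1 ∨ ε = -1)
    (j : ℕ) (hj1 : 2 ≤ j) (hjk : k = 2 * (j + 1))
    (r : ℤ) (hr : Odd r) (m : ℤ) (hm : m = ε + (2 : ℤ) ^ j * r) :
    ((Finset.Icc 1 ((2 : ℤ) ^ k)).filter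
      (fun x => ((2 : ℤ) ^ k) ∣ (x - m) * (x * m - 1))).card = 2 ^ (j + 1) := by
  obtain ⟨p, rfl⟩ : ∃ p, j = p + 2 := ⟨j - 2, by omega⟩
  subst hjk hm
  set u : ℤ := ε * r + 2^(p+1) * r^2 with hu
  have hεodd : Odd ε := by rcases hε with rfl | rfl <;> decide
  have hmodd : Odd (ε + (2:ℤ)^(p+2) * r) := by
    refine hεodd.add_even ?_
    have h2 : Even ((2:ℤ)^(p+2)) := by
      have : (2:ℤ)^(p+2) = 2^(p+1) * 2 := by rw [pow_succ]
      rw [this, mul_comm]; exact even_two_mul _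
    exact h2.mul_right r
  have huodd : Odd u := by
    refine (hεodd.mul hr).add_even ?_
    have h2 : Even ((2:ℤ)^(p+1)) := by
      have : (2:ℤ)^(p+1) = 2^p * 2 := by rw [pow_succ]
      rw [this, mul_comm]; exact even_two_mul _
    exact h2.mul_right _
  have hε2 : ε^2 = 1 := by rcases hε with rfl | rfl <;> norm_num
  have hiff : ∀ x : ℤ, ((2:ℤ)^(2*(p+2+1)) ∣ (x - (ε + 2^(p+2)*r)) * (x * (ε + 2^(p+2)*r) - 1))
      ↔ ((2:ℤ)^(p+3) ∣ x - (ε + 2^(p+2)*r)) := by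
    intro x
    have hid : (x - (ε + 2^(p+2)*r)) * (x * (ε + 2^(p+2)*r) - 1)
        = (x - (ε + 2^(p+2)*r)) * ((x - (ε + 2^(p+2)*r)) * (ε + 2^(p+2)*r) + 2^(p+3)*u) := by
      rw [hu]; linear_combination (x - ε - 2^(p+2)*r) * hε2
    have hexp : 2*(p+2+1) = 2*p+6 := by omega
    rw [hid, hexp]
    exact coreA p _ _ u hmodd huodd
  have hpow : ((2:ℤ)^(2*(p+2+1))) = 2^(p+3) * ((2^(p+3) : ℕ) : ℤ) := by
    push_cast
    rw [← pow_add]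
    congr 1
    omega
  calc ((Finset.Icc 1 ((2:ℤ) ^ (2*(p+2+1)))).filter
      (fun x => ((2:ℤ) ^ (2*(p+2+1))) ∣ (x - (ε + 2^(p+2)*r)) * (x * (ε + 2^(p+2)*r) - 1))).card
      = ((Finset.Icc 1 ((2:ℤ)^(p+3) * ((2^(p+3) : ℕ) : ℤ))).filter
        (fun x => (2:ℤ)^(p+3) ∣ x - (ε + 2^(p+2)*r))).card := by
        rw [← hpow]
        exact congrArg Finset.card (Finset.filter_congr (fun x _ => hiff x))
    _ = 2^(p+3) := coreB _ (by positivity) _ _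
    _ = 2^(p+2+1) := rfl
end

section
/- Let k be a positive odd integer, ε ∈ {1,−1}, and m = ε + 2^j r with j = (k−1)/2 ≥ 2 and r odd. Then the number of integers x with 1 ≤ x ≤ 2^k and (x−m)(xm−1) ≡ 0 (mod 2^k) equals 2^j. -/
/-!
Write `y = x - m`, so that `x * m - 1 = m * y + (m ^ 2 - 1)`, and `2 ^ (j + 1) ∣ m ^ 2 - 1` with
`m` odd. If `2 ^ a` exactly divides `y` with `a ≤ j`, then it also exactly divides `m * y + (m ^ 2 - 1)`,
so the product has `2`-adic valuation `2 * a < k`; if `2 ^ (j + 1) ∣ y`, both factors are divisible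
by `2 ^ (j + 1)`. Hence the solutions are exactly `x ≡ m [ZMOD 2 ^ (j + 1)]`, and an interval of
length `2 ^ k = 2 ^ (j + 1) * 2 ^ j` contains `2 ^ j` of them.
-/

open Finset

theorem Int.card_Ioc_filter_modEq_of_length_eq_mul {d : ℤ} (hd : 0 < d) (a v : ℤ) (q : ℕ) :
    #{x ∈ Ioc a (a + d * q) | x ≡ v [ZMOD d]} = q := by
  have h := Int.Ioc_filter_modEq_card a (a + d * q) hd v
  have hsplit : ((a + d * q : ℤ) - v : ℚ) / d = (a - v) / d + (q : ℤ) := by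
    field_simp
    push_cast
    ring
  rw [hsplit, Int.floor_add_intCast, add_sub_cancel_left, max_eq_left (by positivity)] at h
  exact_mod_cast h

theorem prime_pow_dvd_mul_mul_add_iff {p m c y : ℤ} {e : ℕ} (hp : Prime p) (hm : ¬p ∣ m)
    (hc : p ^ (e + 1) ∣ c) : p ^ (2 * e + 1) ∣ y * (m * y + c) ↔ p ^ (e + 1) ∣ y := by
  constructor
  · intro hdvd
    by_contra hy
    have hy0 : y ≠ 0 := by rintro rfl; exact hy (dvd_zero _)
    have hfin : FiniteMultiplicity p y :=
      Int.finiteMultiplicity_iff.mpr ⟨fun h => hp.not_isUnit (Int.isUnit_iff_natAbs_eq.mpr h), hy0⟩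
    obtain ⟨u, hyu, hu⟩ := hfin.exists_eq_pow_mul_and_not_dvd
    set a := multiplicity p y
    have ha : a ≤ e := by
      by_contra! ha
      exact hy (hyu ▸ (pow_dvd_pow p ha).mul_right u)
    obtain ⟨c', rfl⟩ : p ^ (a + 1) ∣ c := (pow_dvd_pow p (by omega)).trans hc
    have hprod : y * (m * y + p ^ (a + 1) * c') = p ^ (2 * a) * (u * (m * u + p * c')) := by
      rw [hyu]; ring
    have hp_dvd : p ∣ u * (m * u + p * c') := by
      have h := (pow_dvd_pow p (by omega : 2 * a + 1 ≤ 2 * e + 1)).trans hdvd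
      rwa [hprod, pow_succ, mul_dvd_mul_iff_left (pow_ne_zero _ hp.ne_zero)] at h
    rcases hp.dvd_or_dvd hp_dvd with h | h
    · exact hu h
    · rcases hp.dvd_or_dvd ((dvd_add_left (dvd_mul_right p c')).mp h) with h | h
      · exact hm h
      · exact hu h
  · intro hy
    have hsq : p ^ (2 * e + 2) ∣ y * (m * y + c) := by
      rw [show 2 * e + 2 = (e + 1) + (e + 1) by ring, pow_add]
      exact mul_dvd_mul hy (dvd_add (hy.mul_left m) hc)
    exact (pow_dvd_pow p (by omega)).trans hsq

theorem two_pow_succ_dvd_sq_sub_one {ε m : ℤ} {j : ℕ} (hε : ε ^ 2 = 1) (hj : 1 ≤ j)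
    (hm : 2 ^ j ∣ m - ε) : 2 ^ (j + 1) ∣ m ^ 2 - 1 := by
  obtain ⟨i, rfl⟩ : ∃ i, j = i + 1 := ⟨j - 1, by omega⟩
  obtain ⟨t, ht⟩ := hm
  exact ⟨t * (2 ^ i * t + ε), by linear_combination (m + ε + 2 ^ (i + 1) * t) * ht + hε⟩

theorem stmt9_general (k : ℕ) (ε : ℤ) (hε : ε = 1 ∨ ε = -1)
    (j : ℕ) (hj1 : 2 ≤ j) (hjk : k = 2 * j + 1)
    (r : ℤ) (m : ℤ) (hm : m = ε + (2 : ℤ) ^ j * r) :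
    ((Finset.Icc 1 ((2 : ℤ) ^ k)).filter
      (fun x => ((2 : ℤ) ^ k) ∣ (x - m) * (x * m - 1))).card = 2 ^ j := by
  have hε2 : ε ^ 2 = 1 := by rcases hε with rfl | rfl <;> norm_num
  have hm_odd : ¬(2 : ℤ) ∣ m := by
    rw [← even_iff_two_dvd, Int.not_even_iff_odd, hm]
    exact (hε.elim (· ▸ odd_one) (· ▸ odd_neg_one)).add_even
      ((even_two.pow_of_ne_zero (by omega)).mul_right r)
  have hsq : 2 ^ (j + 1) ∣ m ^ 2 - 1 :=
    two_pow_succ_dvd_sq_sub_one hε2 (by omega) ⟨r, by rw [hm]; ring⟩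
  have hfilter : ∀ x : ℤ, (2 : ℤ) ^ k ∣ (x - m) * (x * m - 1) ↔ x ≡ m [ZMOD 2 ^ (j + 1)] := by
    intro x
    rw [hjk, show x * m - 1 = m * (x - m) + (m ^ 2 - 1) by ring,
      prime_pow_dvd_mul_mul_add_iff Int.prime_two hm_odd hsq, Int.modEq_comm, Int.modEq_iff_dvd]
  have hIcc : Icc (1 : ℤ) (2 ^ k) = Ioc 0 (0 + 2 ^ (j + 1) * ((2 ^ j : ℕ) : ℤ)) := by
    ext x; simp only [mem_Icc, mem_Ioc]; push_cast
    rw [← pow_add, show j + 1 + j = k by omega]; omega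
  rw [filter_congr fun x _ => hfilter x, hIcc,
    Int.card_Ioc_filter_modEq_of_length_eq_mul (by positivity)]

theorem stmt9 (k : ℕ) (hk : 1 ≤ k) (ε : ℤ) (hε : ε = 1 ∨ ε = -1)
    (j : ℕ) (hj1 : 2 ≤ j) (hjk : k = 2 * j + 1)
    (r : ℤ) (hr : Odd r) (m : ℤ) (hm : m = ε + (2 : ℤ) ^ j * r) :
    ((Finset.Icc 1 ((2 : ℤ) ^ k)).filter
      (fun x => ((2 : ℤ) ^ k) ∣ (x - m) * (x * m - 1))).card = 2 ^ j :=
  stmt9_general k ε hε j hj1 hjk r m hm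
end

section
/- Let p ≥ 3 be prime, k ≥ 1, ε ∈ {1,−1}, m = ε + p^j r and x = ε + p^j s with 1 ≤ j < k/2, p ∤ r, p ∤ s, and r ≡ s (mod p). Then (x−m)(xm−1) ≡ 0 (mod p^k) if and only if s ≡ r (mod p^{k−2j}). -/
theorem stmt13 (p : ℕ) (hp : p.Prime) (hp3 : 3 ≤ p) (k : ℕ) (hk : 1 ≤ k)
    (ε : ℤ) (hε : ε = 1 ∨ ε = -1)
    (j : ℕ) (hj1 : 1 ≤ j) (hj2 : 2 * j < k)
    (r s : ℤ) (hr : ¬ (p : ℤ) ∣ r) (hs : ¬ (p : ℤ) ∣ s)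
    (hrs : r ≡ s [ZMOD (p : ℤ)])
    (m x : ℤ) (hm : m = ε + (p : ℤ) ^ j * r) (hx : x = ε + (p : ℤ) ^ j * s) :
    ((p : ℤ) ^ k) ∣ (x - m) * (x * m - 1) ↔ s ≡ r [ZMOD ((p : ℤ) ^ (k - 2 * j))] := by
  have hp' : Prime (p : ℤ) := Nat.prime_iff_prime_int.mp hp
  set d := k - 2 * j with hd
  have hkd : k = 2 * j + d := by omega
  have hε2 : ε ^ 2 = 1 := by rcases hε with h | h <;> simp [h]
  have key : (x - m) * (x * m - 1)
      = (p : ℤ) ^ (2 * j) * ((s - r) * (ε * (r + s) + (p : ℤ) ^ j * (r * s))) := by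
    subst hm hx
    linear_combination ((p : ℤ) ^ j * (s - r)) * hε2
  have hu : ¬ (p : ℤ) ∣ (ε * (r + s) + (p : ℤ) ^ j * (r * s)) := by
    intro h
    have h1 : (p : ℤ) ∣ (p : ℤ) ^ j * (r * s) :=
      dvd_mul_of_dvd_left (dvd_pow_self _ (by omega)) _
    have h2 : (p : ℤ) ∣ ε * (r + s) := by
      have := dvd_sub h h1
      simpa using this
    have h3 : (p : ℤ) ∣ r + s := by
      have h2' := h2.mul_left ε
      rwa [show ε * (ε * (r + s)) = r + s from by linear_combination (r + s) * hε2] at h2'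
    have hsr : (p : ℤ) ∣ s - r := hrs.dvd
    have h4 : (p : ℤ) ∣ 2 * r := by
      have := dvd_sub h3 hsr
      have e : r + s - (s - r) = 2 * r := by ring
      rwa [e] at this
    rcases hp'.dvd_mul.mp h4 with h5 | h5
    · have := Int.le_of_dvd (by norm_num) h5
      have : (3 : ℤ) ≤ p := by exact_mod_cast hp3
      omega
    · exact hr h5
  have hco : IsCoprime ((p : ℤ) ^ d) (ε * (r + s) + (p : ℤ) ^ j * (r * s)) :=
    (hp'.coprime_iff_not_dvd.mpr hu).pow_left
  have hpne : ((p : ℤ) ^ (2 * j)) ≠ 0 := pow_ne_zero _ (by exact_mod_cast hp.ne_zero)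
  rw [Int.modEq_iff_dvd]
  constructor
  · intro h
    rw [key, hkd, pow_add] at h
    have h6 := (mul_dvd_mul_iff_left hpne).mp h
    have h7 := hco.dvd_of_dvd_mul_right h6
    exact dvd_sub_comm.mp h7
  · intro h
    rw [key, hkd, pow_add]
    exact mul_dvd_mul_left _ ((dvd_sub_comm.mp h).mul_right _)
end

section
/- Let p ≥ 3 be prime, k ≥ 1, ε ∈ {1,−1}, m = ε + p^j r and x = ε + p^j s with k/3 ≤ j < k/2, p ∤ r, p ∤ s, and r ≢ s (mod p). Then (x−m)(xm−1) ≡ 0 (mod p^k) if and only if s ≡ −r (mod p^{k−2j}). -/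
theorem stmt14 (p : ℕ) (hp : p.Prime) (hp3 : 3 ≤ p) (k : ℕ) (hk : 1 ≤ k)
    (ε : ℤ) (hε : ε = 1 ∨ ε = -1)
    (j : ℕ) (hj1 : k ≤ 3 * j) (hj2 : 2 * j < k)
    (r s : ℤ) (hr : ¬ (p : ℤ) ∣ r) (hs : ¬ (p : ℤ) ∣ s)
    (hrs : ¬ r ≡ s [ZMOD (p : ℤ)])
    (m x : ℤ) (hm : m = ε + (p : ℤ) ^ j * r) (hx : x = ε + (p : ℤ) ^ j * s) :
    ((p : ℤ) ^ k) ∣ (x - m) * (x * m - 1) ↔ s ≡ -r [ZMOD ((p : ℤ) ^ (k - 2 * j))] := by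
  have hprime : Prime ((p : ℤ)) := Nat.prime_iff_prime_int.mp hp
  set d := k - 2 * j with hd
  have hkd : k = 2 * j + d := by omega
  have hdj : d ≤ j := by omega
  have hε2 : ε * ε = 1 := by rcases hε with h | h <;> simp [h]
  have hE : (x - m) * (x * m - 1)
      = (p : ℤ) ^ (2 * j) * ((s - r) * (ε * (r + s) + (p : ℤ) ^ j * (r * s))) := by
    subst hm hx
    linear_combination ((p : ℤ) ^ j * (s - r)) * hε2
  have hpk : (p : ℤ) ^ k = (p : ℤ) ^ (2 * j) * (p : ℤ) ^ d := by
    rw [hkd, pow_add]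
  have hpne : ((p : ℤ)) ^ (2 * j) ≠ 0 := pow_ne_zero _ (by exact_mod_cast hp.ne_zero)
  rw [hE, hpk, mul_dvd_mul_iff_left hpne]
  have hsr : ¬ (p : ℤ) ∣ (s - r) := fun h => hrs (Int.modEq_iff_dvd.mpr h)
  have hcop : IsCoprime ((p : ℤ) ^ d) (s - r) :=
    (IsCoprime.pow_left ((hprime.coprime_iff_not_dvd).mpr hsr))
  have hdvdj : (p : ℤ) ^ d ∣ (p : ℤ) ^ j := pow_dvd_pow _ hdj
  constructor
  · intro h
    have h1 : (p : ℤ) ^ d ∣ ε * (r + s) + (p : ℤ) ^ j * (r * s) :=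
      hcop.dvd_of_dvd_mul_left h
    have h2 : (p : ℤ) ^ d ∣ ε * (r + s) := by
      have := dvd_sub h1 (hdvdj.mul_right (r * s))
      simpa using this
    have h3 : (p : ℤ) ^ d ∣ (r + s) := by
      rcases hε with h | h
      · simpa [h] using h2
      · rw [h, neg_one_mul, dvd_neg] at h2; exact h2
    exact Int.modEq_iff_dvd.mpr (by rw [show (-r - s) = -(r + s) by ring]; exact dvd_neg.mpr h3)
  · intro h
    have h3 : (p : ℤ) ^ d ∣ (r + s) := by
      have := Int.modEq_iff_dvd.mp h
      rw [show (-r - s) = -(r + s) by ring, dvd_neg] at this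
      exact this
    exact ((dvd_add (h3.mul_left ε) (hdvdj.mul_right (r * s))).mul_left (s - r))
end

section
/- Let p ≥ 3 be prime, k ≥ 1, ε ∈ {1,−1}, m = ε + p^j r and x = ε + p^j s with 1 ≤ j < k/3, p ∤ r, p ∤ s, r ≢ s (mod p), and suppose (x−m)(xm−1) ≡ 0 (mod p^k). Then v_p(r+s) = j and, writing s = −r + p^j u, one has (ε + p^j r)·u ≡ r² (mod p^{k−3j}). -/
theorem stmt15 (p : ℕ) (hp : p.Prime) (hp3 : 3 ≤ p) (k : ℕ) (hk : 1 ≤ k)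
    (ε : ℤ) (hε : ε = 1 ∨ ε = -1)
    (j : ℕ) (hj1 : 1 ≤ j) (hj2 : 3 * j < k)
    (r s : ℤ) (hr : ¬ (p : ℤ) ∣ r) (hs : ¬ (p : ℤ) ∣ s)
    (hrs : ¬ r ≡ s [ZMOD (p : ℤ)])
    (m x : ℤ) (hm : m = ε + (p : ℤ) ^ j * r) (hx : x = ε + (p : ℤ) ^ j * s)
    (hsol : ((p : ℤ) ^ k) ∣ (x - m) * (x * m - 1)) :
    ((p : ℤ) ^ j ∣ r + s ∧ ¬ (p : ℤ) ^ (j + 1) ∣ r + s) ∧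
      ∀ u : ℤ, s = -r + (p : ℤ) ^ j * u →
        (ε + (p : ℤ) ^ j * r) * u ≡ r ^ 2 [ZMOD ((p : ℤ) ^ (k - 3 * j))] := by
  have hp' : Prime (p : ℤ) := Int.prime_iff_natAbs_prime.mpr (by simpa using hp)
  have hp0 : (p : ℤ) ≠ 0 := by exact_mod_cast hp.ne_zero
  set P : ℤ := (p : ℤ) ^ j with hP
  set Q : ℤ := (p : ℤ) ^ (k - 3 * j) with hQ
  have hP0 : P ≠ 0 := pow_ne_zero _ hp0
  have hpε : ε * ε = 1 := by rcases hε with h | h <;> simp [h]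
  have hfac : (x - m) * (x * m - 1)
      = (P * P) * ((s - r) * (ε * (r + s) + P * (r * s))) := by
    subst hm hx
    linear_combination ((p : ℤ) ^ j * (s - r)) * hpε
  have hkeq : (p : ℤ) ^ k = P * P * ((p : ℤ) ^ (k - 2 * j)) := by
    rw [hP, ← pow_add, ← pow_add]
    congr 1
    omega
  have hA : (p : ℤ) ^ (k - 2 * j) ∣ (s - r) * (ε * (r + s) + P * (r * s)) := by
    rw [hfac, hkeq] at hsol
    exact (mul_dvd_mul_iff_left (mul_ne_zero hP0 hP0)).mp hsol
  have hsr : ¬ (p : ℤ) ∣ s - r := fun h => hrs (Int.modEq_iff_dvd.mpr h)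
  have hcop : IsCoprime ((p : ℤ) ^ (k - 2 * j)) (s - r) :=
    (IsCoprime.pow_left ((hp'.irreducible.coprime_iff_not_dvd).mpr hsr))
  have hB : (p : ℤ) ^ (k - 2 * j) ∣ ε * (r + s) + P * (r * s) :=
    hcop.dvd_of_dvd_mul_left hA
  obtain ⟨t, ht⟩ := hB
  have hPQ : (p : ℤ) ^ (k - 2 * j) = P * Q := by
    rw [hP, hQ, ← pow_add]; congr 1; omega
  rw [hPQ] at ht
  have hsum : r + s = P * (ε * (Q * t - r * s)) := by
    linear_combination ε * ht - (r + s) * hpε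
  have hQp : (p : ℤ) ∣ Q := by
    rw [hQ]
    exact dvd_pow_self _ (by omega)
  refine ⟨⟨⟨ε * (Q * t - r * s), hsum⟩, ?_⟩, ?_⟩
  · rintro ⟨d, hd⟩
    have hcancel : ε * (Q * t - r * s) = (p : ℤ) * d := by
      have : P * (ε * (Q * t - r * s)) = P * ((p : ℤ) * d) := by
        rw [← hsum, hd, pow_succ]; ring
      exact mul_left_cancel₀ hP0 this
    have hprs : (p : ℤ) ∣ r * s := by
      obtain ⟨q, hq⟩ := hQp
      refine ⟨q * t - ε * d, ?_⟩
      linear_combination -(ε * hcancel) - (r * s - Q * t) * hpε + t * hq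
    rcases hp'.dvd_mul.mp hprs with h | h
    · exact hr h
    · exact hs h
  · intro u hu
    have hueq : P * (ε * u + P * (r * u) - r ^ 2) = P * (Q * t) := by
      rw [hu] at ht
      linear_combination ht
    have h2 := mul_left_cancel₀ hP0 hueq
    refine Int.ModEq.symm (Int.modEq_iff_dvd.mpr ⟨t, ?_⟩)
    linear_combination h2
end

section
/- Let k ≥ 1, ε ∈ {1,−1}, m = ε + 2^j r and x = ε + 2^j s with 2 ≤ j < k/2, r and s odd, and s = r + 2^t u with t ≥ 2 and u odd. Then (x−m)(xm−1) ≡ 0 (mod 2^k) if and only if t ≥ k − 2j − 1. -/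
theorem stmt17 (k : ℕ) (hk : 1 ≤ k) (ε : ℤ) (hε : ε = 1 ∨ ε = -1)
    (j : ℕ) (hj1 : 2 ≤ j) (hj2 : 2 * j < k)
    (r s : ℤ) (hr : Odd r) (hs : Odd s)
    (t : ℕ) (ht : 2 ≤ t) (u : ℤ) (hu : Odd u) (hsu : s = r + 2 ^ t * u)
    (m x : ℤ) (hm : m = ε + (2 : ℤ) ^ j * r) (hx : x = ε + (2 : ℤ) ^ j * s) :
    ((2 : ℤ) ^ k) ∣ (x - m) * (x * m - 1) ↔ k - 2 * j - 1 ≤ t := by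
  obtain ⟨t', rfl⟩ : ∃ t', t = t' + 2 := ⟨t - 2, by omega⟩
  obtain ⟨j', rfl⟩ : ∃ j', j = j' + 2 := ⟨j - 2, by omega⟩
  subst hsu hm hx
  set N := 2 * (j' + 2) + (t' + 2) + 1 with hN
  set v : ℤ := u * (ε * r + 2 ^ (t' + 1) * ε * u
      + 2 ^ (j' + 1) * r * (r + 2 ^ (t' + 2) * u)) with hv
  have hεodd : Odd ε := by rcases hε with h | h <;> subst h <;> decide
  have key : ((ε + 2 ^ (j' + 2) * (r + 2 ^ (t' + 2) * u)) - (ε + 2 ^ (j' + 2) * r)) *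
      ((ε + 2 ^ (j' + 2) * (r + 2 ^ (t' + 2) * u)) * (ε + 2 ^ (j' + 2) * r) - 1)
      = 2 ^ N * v := by
    rw [hv, hN]; rcases hε with h | h <;> subst h <;> ring
  rw [key]
  have hvodd : Odd v := by
    refine hu.mul (Odd.add_even (Odd.add_even (hεodd.mul hr) ?_) ?_)
    · exact ⟨2 ^ t' * ε * u, by ring⟩
    · exact ⟨2 ^ j' * r * (r + 2 ^ (t' + 2) * u), by ring⟩
  constructor
  · intro hdvd
    by_contra hle
    have hk2 : N + 1 ≤ k := by omega
    have h2 : (2 : ℤ) ^ N * 2 ∣ 2 ^ N * v := by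
      calc (2 : ℤ) ^ N * 2 = 2 ^ (N + 1) := by ring
        _ ∣ 2 ^ k := pow_dvd_pow 2 hk2
        _ ∣ 2 ^ N * v := hdvd
    have : (2 : ℤ) ∣ v := (mul_dvd_mul_iff_left (pow_ne_zero N (two_ne_zero))).mp h2
    exact (Int.not_odd_iff_even.mpr (even_iff_two_dvd.mpr this)) hvodd
  · intro h
    exact Dvd.dvd.mul_right (pow_dvd_pow 2 (by omega)) v
end

section
/- Let k ≥ 1, ε ∈ {1,−1}, m = ε + 2^j r and x = ε + 2^j s with 2 ≤ j < k/2 − 1, r and s odd, and s = r + 2u with u odd. Then (x−m)(xm−1) ≡ 0 (mod 2^k) if and only if u·(ε + 2^j r) ≡ −(ε r + 2^{j−1} r²) (mod 2^{k−2(j+1)}). -/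
theorem stmt18 (k : ℕ) (hk : 1 ≤ k) (ε : ℤ) (hε : ε = 1 ∨ ε = -1)
    (j : ℕ) (hj1 : 2 ≤ j) (hj2 : 2 * j + 2 < k)
    (r s : ℤ) (hr : Odd r) (hs : Odd s)
    (u : ℤ) (hu : Odd u) (hsu : s = r + 2 * u)
    (m x : ℤ) (hm : m = ε + (2 : ℤ) ^ j * r) (hx : x = ε + (2 : ℤ) ^ j * s) :
    ((2 : ℤ) ^ k) ∣ (x - m) * (x * m - 1) ↔
      u * (ε + (2 : ℤ) ^ j * r) ≡ -(ε * r + (2 : ℤ) ^ (j - 1) * r ^ 2)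
        [ZMOD ((2 : ℤ) ^ (k - 2 * (j + 1)))] := by
  obtain ⟨t, rfl⟩ : ∃ t, j = t + 1 := ⟨j - 1, by omega⟩
  obtain ⟨e, rfl⟩ : ∃ e, k = 2 * (t + 1) + 2 + e := ⟨k - (2 * (t + 1) + 2), by omega⟩
  have hε2 : ε ^ 2 = 1 := by rcases hε with h | h <;> simp [h]
  have h1 : (t + 1) - 1 = t := by omega
  have h2 : 2 * (t + 1) + 2 + e - 2 * ((t + 1) + 1) = e := by omega
  rw [h1, h2]
  set B' := u * (ε + (2 : ℤ) ^ (t + 1) * r) with hB'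
  set C := ε * r + (2 : ℤ) ^ t * r ^ 2 with hC
  have key : (x - m) * (x * m - 1) = 2 ^ (2 * (t + 1) + 2) * (u * (B' + C)) := by
    subst hm hx hsu
    rw [hB', hC]
    linear_combination (2 ^ (t + 2) * u) * hε2
  rw [Int.modEq_iff_dvd, key, pow_add,
    mul_dvd_mul_iff_left (pow_ne_zero _ (two_ne_zero (α := ℤ)))]
  have heq : -C - B' = -(B' + C) := by ring
  rw [heq, dvd_neg]
  have hcop : IsCoprime ((2 : ℤ) ^ e) u := by
    apply IsCoprime.pow_left
    rw [Int.prime_two.coprime_iff_not_dvd]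
    rw [Int.two_dvd_ne_zero, Int.odd_iff.mp hu]
  exact ⟨fun h => hcop.dvd_of_dvd_mul_left h, fun h => h.mul_left u⟩
end
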